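/- arXiv:2307.02168 — 3 statements merged into one kernel-verified Lean document; each statement's English description precedes it below -/
import Mathlib

section
/- If a function φ : P_2(ℝ^d) → ℝ has intrinsic derivative satisfying |D_m φ(m', x)| ≤ M_1 for all m', x, then for each i the map ξ^i ↦ φ((1/N)∑_{j=1}^N δ_{ξ^j}) (with the other ξ^j fixed) is Lipschitz with constant M_1/N, and consequently by the Efron–Stein inequality, for i.i.d. ξ_1,...,ξ_N ∼ m with finite second moment, Var φ(μ_ξ) ≤ M_1² Var(m)/N. -/
open MeasureTheory ProbabilityTheory
open scoped ENNReal

noncomputable section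

abbrev Euc (d : ℕ) := EuclideanSpace ℝ (Fin d)

/-- Convex combination `(1-t) μ + t ν` of measures. -/
def mix {α : Type*} [MeasurableSpace α] (μ ν : Measure α) (t : ℝ) : Measure α :=
  (ENNReal.ofReal (1 - t)) • μ + (ENNReal.ofReal t) • ν

/-- `δφ` is a linear functional derivative of `φ` on the space of probability measures. -/
structure IsLinearDeriv {α : Type*} [MeasurableSpace α] (φ : Measure α → ℝ)
    (δφ : Measure α → α → ℝ) : Prop where
  hasDeriv : ∀ μ ν : Measure α, IsProbabilityMeasure μ → IsProbabilityMeasure ν →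
    φ ν - φ μ =
      ∫ t in (0:ℝ)..1, (∫ x, δφ (mix μ ν t) x ∂ν - ∫ x, δφ (mix μ ν t) x ∂μ)

/-- Variance of a measure on `ℝ^d`. -/
noncomputable def varM {d : ℕ} (m : Measure (Euc d)) : ℝ :=
  ∫ x, ‖x - ∫ y, y ∂m‖ ^ 2 ∂m

/-- Empirical measure of `N` points. -/
noncomputable def emp {d N : ℕ} (ξ : Fin N → Euc d) : Measure (Euc d) :=
  (N : ℝ≥0∞)⁻¹ • ∑ i, Measure.dirac (ξ i)


/-!
Along the segment `t ↦ (1 - t) μ_{x'} + t μ_x`, the linear derivative writes `φ(μ_x) - φ(μ_{x'})`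
as an average of `∫ δφ dμ_x - ∫ δφ dμ_{x'}`; when `x` and `x'` differ only in the `i`-th point this
is `(δφ(x_i) - δφ(x'_i)) / N`, at most `M₁ ‖x_i - x'_i‖ / N` by the gradient bound.

For the variance, a function that is `L`-Lipschitz in each of `n` coordinates has variance at most
`n L² Var(m)` under `m^{⊗n}`. Split `m^{⊗n} = m ⊗ m^{⊗(n-1)}` and apply the law of total
variance: each slice in the first coordinate is `L`-Lipschitz, so its variance is at most
`E (g(X) - g(E X))² ≤ L² Var(m)`, and averaging out the first coordinate leaves a function that is
still `L`-Lipschitz in the remaining `n - 1` coordinates, to which induction applies.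
-/

open Function
open scoped NNReal

lemma abs_sub_le_of_norm_gradient_le {E : Type*} [NormedAddCommGroup E] [InnerProductSpace ℝ E]
    [CompleteSpace E] {g : E → ℝ} {C : ℝ} (hg : Differentiable ℝ g)
    (hC : ∀ x, ‖gradient g x‖ ≤ C) (a b : E) : |g a - g b| ≤ C * ‖a - b‖ := by
  have hfderiv : ∀ x, ‖fderiv ℝ g x‖ ≤ C := fun x => by simpa [gradient] using hC x
  simpa [Real.norm_eq_abs] using convex_univ.norm_image_sub_le_of_norm_fderiv_le
    (fun x _ => hg x) (fun x _ => hfderiv x) (Set.mem_univ b) (Set.mem_univ a)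

section LinearDeriv

variable {α : Type*} [MeasurableSpace α] {μ ν : Measure α}
  [IsProbabilityMeasure μ] [IsProbabilityMeasure ν]

lemma isProbabilityMeasure_mix {t : ℝ} (ht : t ∈ Set.Icc (0 : ℝ) 1) :
    IsProbabilityMeasure (mix μ ν t) := by
  constructor
  simp only [mix, Measure.add_apply, Measure.smul_apply, smul_eq_mul, measure_univ, mul_one]
  rw [← ENNReal.ofReal_add (by linarith [ht.2]) ht.1]
  norm_num

lemma IsLinearDeriv.abs_sub_le {φ : Measure α → ℝ} {δφ : Measure α → α → ℝ}
    (hδ : IsLinearDeriv φ δφ) {C : ℝ}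
    (hC : ∀ t ∈ Set.Icc (0 : ℝ) 1,
      |∫ x, δφ (mix μ ν t) x ∂ν - ∫ x, δφ (mix μ ν t) x ∂μ| ≤ C) :
    |φ ν - φ μ| ≤ C := by
  rw [hδ.hasDeriv μ ν inferInstance inferInstance]
  have hC' : ∀ t ∈ Set.uIoc (0 : ℝ) 1,
      ‖∫ x, δφ (mix μ ν t) x ∂ν - ∫ x, δφ (mix μ ν t) x ∂μ‖ ≤ C := by
    intro t ht
    rw [Set.uIoc_of_le zero_le_one] at ht
    exact hC t (Set.Ioc_subset_Icc_self ht)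
  simpa using intervalIntegral.norm_integral_le_of_norm_le_const hC'

end LinearDeriv

section Empirical

variable {d N : ℕ}

instance isProbabilityMeasure_emp [NeZero N] (x : Fin N → Euc d) :
    IsProbabilityMeasure (emp x) := by
  constructor
  simp [emp, ENNReal.inv_mul_cancel (NeZero.ne (N : ℝ≥0∞)) (ENNReal.natCast_ne_top N)]

lemma integral_emp {f : Euc d → ℝ} (hf : Measurable f) (x : Fin N → Euc d) :
    ∫ a, f a ∂(emp x) = (N : ℝ)⁻¹ * ∑ i, f (x i) := by
  rw [emp, integral_smul_measure, integral_finsetSum_measure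
    fun i _ => (integrable_const (f (x i))).congr (ae_eq_dirac' hf).symm]
  simp [integral_dirac' _ _ hf.stronglyMeasurable, ENNReal.toReal_inv]

lemma abs_integral_emp_sub_le {f : Euc d → ℝ} (hf : Measurable f) {C : ℝ}
    (hC : ∀ a b, |f a - f b| ≤ C * ‖a - b‖) {i : Fin N} {x x' : Fin N → Euc d}
    (hx : ∀ j ≠ i, x j = x' j) :
    |∫ a, f a ∂(emp x) - ∫ a, f a ∂(emp x')| ≤ C / N * ‖x i - x' i‖ := by
  have hsum : ∑ j, (f (x j) - f (x' j)) = f (x i) - f (x' i) :=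
    Finset.sum_eq_single i (fun j _ hj => by rw [hx j hj, sub_self]) (by simp)
  rw [integral_emp hf, integral_emp hf, ← mul_sub, ← Finset.sum_sub_distrib, hsum, abs_mul,
    abs_inv, Nat.abs_cast, div_eq_inv_mul, mul_assoc]
  exact mul_le_mul_of_nonneg_left (hC _ _) (by positivity)

theorem IsLinearDeriv.abs_sub_emp_le [NeZero N] {φ : Measure (Euc d) → ℝ}
    {δφ : Measure (Euc d) → Euc d → ℝ} (hδ : IsLinearDeriv φ δφ) {M : ℝ}
    (hdiff : ∀ m', IsProbabilityMeasure m' → Differentiable ℝ (δφ m'))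
    (hgrad : ∀ m', IsProbabilityMeasure m' → ∀ x, ‖gradient (δφ m') x‖ ≤ M)
    {i : Fin N} {x x' : Fin N → Euc d} (hx : ∀ j ≠ i, x j = x' j) :
    |φ (emp x) - φ (emp x')| ≤ M / N * ‖x i - x' i‖ := by
  refine hδ.abs_sub_le fun t ht => ?_
  have := isProbabilityMeasure_mix (μ := emp x') (ν := emp x) ht
  exact abs_integral_emp_sub_le (hdiff _ this).continuous.measurable
    (abs_sub_le_of_norm_gradient_le (hdiff _ this) (hgrad _ this)) hx

end Empirical

section Variance

variable {Ω : Type*} [MeasurableSpace Ω] {μ : Measure Ω} [IsProbabilityMeasure μ]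

lemma integral_sub_sq_eq_variance_add {X : Ω → ℝ} (hX : MemLp X 2 μ) (a : ℝ) :
    ∫ ω, (X ω - a) ^ 2 ∂μ = Var[X; μ] + (μ[X] - a) ^ 2 := by
  have hXa : MemLp (fun ω => X ω - a) 2 μ := hX.sub (memLp_const a)
  have h := variance_eq_sub hXa
  rw [variance_sub_const hX.aestronglyMeasurable,
    integral_sub (hX.integrable one_le_two) (integrable_const a)] at h
  simp only [integral_const, probReal_univ, smul_eq_mul, one_mul, Pi.pow_apply] at h
  linarith

variable {E : Type*} [NormedAddCommGroup E] [MeasurableSpace E] [OpensMeasurableSpace E]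
  {m : Measure E} [IsProbabilityMeasure m]

lemma LipschitzWith.memLp {g : E → ℝ} {K : ℝ≥0} (hg : LipschitzWith K g) {p : ℝ≥0∞}
    (hm : MemLp id p m) : MemLp g p m := by
  refine ((memLp_const ‖g 0‖).add (hm.norm.const_mul K)).of_le
    hg.continuous.aestronglyMeasurable (ae_of_all _ fun x => ?_)
  have h := hg.dist_le_mul x 0
  rw [dist_eq_norm, dist_eq_norm, sub_zero, Real.norm_eq_abs] at h
  simp only [Pi.add_apply, id, Real.norm_eq_abs]
  rw [abs_of_nonneg (show 0 ≤ |g 0| + K * ‖x‖ by positivity)]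
  linarith [abs_sub_abs_le_abs_sub (g x) (g 0)]

lemma LipschitzWith.variance_le {g : E → ℝ} {K : ℝ≥0} (hg : LipschitzWith K g)
    (hm : MemLp id 2 m) (c : E) : Var[g; m] ≤ K ^ 2 * ∫ x, ‖x - c‖ ^ 2 ∂m := by
  have hgm : AEStronglyMeasurable g m := hg.continuous.aestronglyMeasurable
  have hc : Integrable (fun x => ‖x - c‖ ^ 2) m :=
    (hm.sub (memLp_const c)).integrable_norm_pow two_ne_zero
  calc Var[g; m] = Var[fun x => g x - g c; m] := (variance_sub_const hgm _).symm
    _ ≤ ∫ x, (g x - g c) ^ 2 ∂m := variance_le_expectation_sq (hgm.sub aestronglyMeasurable_const)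
    _ ≤ ∫ x, K ^ 2 * ‖x - c‖ ^ 2 ∂m := by
        refine integral_mono_of_nonneg (ae_of_all _ fun _ => sq_nonneg _) (hc.const_mul _)
          (ae_of_all _ fun x => ?_)
        show (g x - g c) ^ 2 ≤ K ^ 2 * ‖x - c‖ ^ 2
        rw [← mul_pow, ← sq_abs]
        exact pow_le_pow_left₀ (abs_nonneg _) (by simpa [dist_eq_norm] using hg.dist_le_mul x c) 2
    _ = K ^ 2 * ∫ x, ‖x - c‖ ^ 2 ∂m := integral_const_mul _ _

end Variance

section TotalVariance

variable {α β : Type*} [MeasurableSpace α] [MeasurableSpace β] {m : Measure α} {ν : Measure β}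
  [IsProbabilityMeasure m] [IsProbabilityMeasure ν]

lemma variance_prod_eq_integral_variance_add {F : α × β → ℝ} (hF : MemLp F 2 (m.prod ν)) :
    Var[F; m.prod ν] =
      ∫ y, Var[fun a => F (a, y); m] ∂ν + Var[fun y => ∫ a, F (a, y) ∂m; ν] := by
  set c := ∫ z, F z ∂(m.prod ν)
  set G := fun y => ∫ a, F (a, y) ∂m
  have hFi : Integrable F (m.prod ν) := hF.integrable one_le_two
  have hGi : Integrable G ν := hFi.integral_prod_right
  have hsq : Integrable (fun z => (F z - c) ^ 2) (m.prod ν) :=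
    (hF.sub (memLp_const c)).integrable_sq
  have hslice : ∀ᵐ y ∂ν, MemLp (fun a => F (a, y)) 2 m := by
    filter_upwards [hF.integrable_sq.prod_left_ae, hF.aestronglyMeasurable.prodMk_right]
      with y hy hym
    exact (memLp_two_iff_integrable_sq hym).2 hy
  have hdecomp : ∀ᵐ y ∂ν,
      ∫ a, (F (a, y) - c) ^ 2 ∂m = Var[fun a => F (a, y); m] + (G y - c) ^ 2 := by
    filter_upwards [hslice] with y hy
    exact integral_sub_sq_eq_variance_add hy c
  have hGsq : Integrable (fun y => (G y - c) ^ 2) ν := by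
    refine hsq.integral_prod_right.mono'
      ((hGi.aestronglyMeasurable.sub aestronglyMeasurable_const).pow 2) ?_
    filter_upwards [hdecomp] with y hy
    rw [Real.norm_eq_abs, abs_of_nonneg (sq_nonneg _), hy]
    linarith [variance_nonneg (fun a => F (a, y)) m]
  have hVi : Integrable (fun y => Var[fun a => F (a, y); m]) ν :=
    (hsq.integral_prod_right.sub hGsq).congr (by filter_upwards [hdecomp] with y hy; simp [hy])
  rw [variance_eq_integral hF.aestronglyMeasurable.aemeasurable, integral_prod_symm _ hsq,
    integral_congr_ae hdecomp, integral_add hVi hGsq,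
    variance_eq_integral hGi.aestronglyMeasurable.aemeasurable,
    ← integral_prod_symm F hFi]

end TotalVariance

lemma lipschitzWith_integral {α β : Type*} [MeasurableSpace α] {μ : Measure α}
    [IsProbabilityMeasure μ] [PseudoMetricSpace β] {f : α → β → ℝ} {K : ℝ≥0}
    (hf : ∀ a, LipschitzWith K (f a)) (hint : ∀ y, Integrable (fun a => f a y) μ) :
    LipschitzWith K fun y => ∫ a, f a y ∂μ := by
  refine LipschitzWith.of_dist_le_mul fun y y' => ?_
  rw [dist_eq_norm, ← integral_sub (hint y) (hint y')]
  simpa using norm_integral_le_of_norm_le_const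
    (ae_of_all μ fun a => (dist_eq_norm (f a y) (f a y')).symm.trans_le ((hf a).dist_le_mul y y'))

section CoordLipschitz

variable {ι E : Type*} [DecidableEq ι]

def CoordLipschitzWith [PseudoMetricSpace E] (K : ℝ≥0) (F : (ι → E) → ℝ) : Prop :=
  ∀ (i : ι) (x : ι → E), LipschitzWith K fun a => F (update x i a)

variable [Fintype ι] [PseudoMetricSpace E] {K : ℝ≥0} {F : (ι → E) → ℝ}

lemma CoordLipschitzWith.dist_le_sum (hF : CoordLipschitzWith K F) (x y : ι → E) :
    dist (F x) (F y) ≤ K * ∑ i, dist (x i) (y i) := by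
  suffices h : ∀ s : Finset ι,
      dist (F x) (F (s.piecewise y x)) ≤ K * ∑ i ∈ s, dist (x i) (y i) by
    simpa using h Finset.univ
  intro s
  induction s using Finset.induction_on with
  | empty => simp
  | insert a s ha ih =>
    have hstep : dist (F (s.piecewise y x)) (F ((insert a s).piecewise y x)) ≤
        K * dist (x a) (y a) := by
      have := (hF a (s.piecewise y x)).dist_le_mul (s.piecewise y x a) (y a)
      rwa [update_eq_self, Finset.piecewise_eq_of_notMem _ _ _ ha,
        ← Finset.piecewise_insert] at this
    rw [Finset.sum_insert ha, mul_add]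
    linarith [dist_triangle (F x) (F (s.piecewise y x)) (F ((insert a s).piecewise y x))]

lemma CoordLipschitzWith.lipschitzWith (hF : CoordLipschitzWith K F) :
    LipschitzWith (K * Fintype.card ι) F := by
  refine LipschitzWith.of_dist_le_mul fun x y => ?_
  calc dist (F x) (F y) ≤ K * ∑ i, dist (x i) (y i) := hF.dist_le_sum x y
    _ ≤ K * ∑ _i : ι, dist x y := by gcongr with i; exact dist_le_pi_dist x y i
    _ = _ := by simp; ring

end CoordLipschitz

section EfronStein

variable {E : Type*} [NormedAddCommGroup E] [MeasurableSpace E] [BorelSpace E]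
  [SecondCountableTopology E] {m : Measure E} [IsProbabilityMeasure m] {K : ℝ≥0}

lemma CoordLipschitzWith.memLp_pi {ι : Type*} [Fintype ι] [DecidableEq ι]
    {F : (ι → E) → ℝ} (hF : CoordLipschitzWith K F) (hm : MemLp id 2 m) :
    MemLp F 2 (Measure.pi fun _ : ι => m) :=
  hF.lipschitzWith.memLp
    (memLp_pi_iff.2 fun i => hm.comp_measurePreserving (measurePreserving_eval _ i))

theorem CoordLipschitzWith.variance_pi_le {n : ℕ} {F : (Fin n → E) → ℝ}
    (hF : CoordLipschitzWith K F) (hm : MemLp id 2 m) (c : E) :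
    Var[F; Measure.pi fun _ => m] ≤ n * (K ^ 2 * ∫ x, ‖x - c‖ ^ 2 ∂m) := by
  induction n with
  | zero =>
    have hconst : F = fun _ => F 0 := funext fun x => congrArg F (Subsingleton.elim x 0)
    rw [hconst]
    simp [variance_eq_integral aemeasurable_const]
  | succ n ih =>
    set ν := Measure.pi fun _ : Fin n => m
    have hmp : MeasurePreserving (MeasurableEquiv.piFinSuccAbove (fun _ => E) 0).symm
        (m.prod ν) (Measure.pi fun _ => m) :=
      (measurePreserving_piFinSuccAbove (fun _ => m) 0).symm
    have hslice : ∀ y, LipschitzWith K fun a => F (Fin.cons a y) := fun y => by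
      simpa only [Fin.update_cons_zero] using hF 0 (Fin.cons c y)
    have hG : CoordLipschitzWith K fun y => ∫ a, F (Fin.cons a y) ∂m := fun i y => by
      simp_rw [Fin.cons_update]
      exact lipschitzWith_integral (fun a => hF i.succ (Fin.cons a y))
        fun b => by simpa only [Fin.cons_update] using
          ((hslice (update y i b)).memLp hm).integrable one_le_two
    have hcons : ∀ z : E × (Fin n → E),
        (MeasurableEquiv.piFinSuccAbove (fun _ => E) 0).symm z = Fin.cons z.1 z.2 := fun z => by
      simp only [MeasurableEquiv.piFinSuccAbove_symm_apply, Fin.insertNthEquiv_zero]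
      rfl
    have hF' : MemLp (fun z : E × (Fin n → E) => F (Fin.cons z.1 z.2)) 2 (m.prod ν) := by
      simpa only [Function.comp_def, hcons] using (hF.memLp_pi hm).comp_measurePreserving hmp
    calc Var[F; Measure.pi fun _ => m]
        = Var[fun z : E × (Fin n → E) => F (Fin.cons z.1 z.2); m.prod ν] := by
          rw [← hmp.variance_fun_comp hF.lipschitzWith.continuous.aemeasurable]
          simp only [hcons]
      _ = ∫ y, Var[fun a => F (Fin.cons a y); m] ∂ν
            + Var[fun y => ∫ a, F (Fin.cons a y) ∂m; ν] :=
          variance_prod_eq_integral_variance_add hF'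
      _ ≤ K ^ 2 * ∫ x, ‖x - c‖ ^ 2 ∂m + n * (K ^ 2 * ∫ x, ‖x - c‖ ^ 2 ∂m) := by
          refine add_le_add ?_ (ih hG)
          refine (integral_mono_of_nonneg (ae_of_all _ fun y => variance_nonneg _ _)
            (integrable_const _) (ae_of_all _ fun y => (hslice y).variance_le hm c)).trans ?_
          simp
      _ = (n + 1 : ℕ) * (K ^ 2 * ∫ x, ‖x - c‖ ^ 2 ∂m) := by push_cast; ring

end EfronStein

/-- **Coordinate Lipschitz continuity and Efron–Stein variance bound.**
If `φ` has intrinsic derivative bounded by `M₁`, then `ξ^i ↦ φ(μ_ξ)` is `(M₁/N)`-Lipschitz in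
each coordinate, and for i.i.d. `ξ₁,…,ξ_N ∼ m` with finite second moment,
`Var φ(μ_ξ) ≤ M₁² Var(m)/N`. -/
theorem empirical_lipschitz_and_efron_stein {d N : ℕ} (hN : 0 < N)
    {Ω : Type*} [MeasurableSpace Ω] (P : Measure Ω) [IsProbabilityMeasure P]
    (φ : Measure (Euc d) → ℝ) (δφ : Measure (Euc d) → Euc d → ℝ) (M1 : ℝ)
    (hδ : IsLinearDeriv φ δφ)
    (hδdiff : ∀ (m' : Measure (Euc d)), IsProbabilityMeasure m' → Differentiable ℝ (δφ m'))
    (hM1 : ∀ (m' : Measure (Euc d)), IsProbabilityMeasure m' →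
      ∀ x, ‖gradient (δφ m') x‖ ≤ M1)
    (m : Measure (Euc d)) [IsProbabilityMeasure m]
    (hmom : Integrable (fun x : Euc d => ‖x‖ ^ 2) m)
    (ξ : Fin N → Ω → Euc d) (hmeas : ∀ i, Measurable (ξ i))
    (hiid : Measure.map (fun ω i => ξ i ω) P = Measure.pi fun _ => m) :
    (∀ (i : Fin N) (x x' : Fin N → Euc d), (∀ j, j ≠ i → x j = x' j) →
      |φ (emp x) - φ (emp x')| ≤ (M1 / N) * ‖x i - x' i‖) ∧
    ∫ ω, (φ (emp fun i => ξ i ω) - ∫ ω', φ (emp fun i => ξ i ω') ∂P) ^ 2 ∂P ≤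
      M1 ^ 2 * varM m / N := by
  have : NeZero N := ⟨hN.ne'⟩
  have hlip : ∀ (i : Fin N) (x x' : Fin N → Euc d), (∀ j, j ≠ i → x j = x' j) →
      |φ (emp x) - φ (emp x')| ≤ (M1 / N) * ‖x i - x' i‖ :=
    fun i x x' hx => hδ.abs_sub_emp_le hδdiff hM1 hx
  refine ⟨hlip, ?_⟩
  have hL : 0 ≤ M1 / N := div_nonneg ((norm_nonneg _).trans (hM1 m inferInstance 0)) N.cast_nonneg
  have hF : CoordLipschitzWith ⟨M1 / N, hL⟩ fun x : Fin N → Euc d => φ (emp x) :=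
    fun i x => LipschitzWith.of_dist_le_mul fun a b => by
      have h := hlip i (update x i a) (update x i b) fun j hj => by simp [update_of_ne hj]
      rw [update_self, update_self] at h
      rwa [Real.dist_eq, dist_eq_norm]
  have hT : Measurable fun ω i => ξ i ω := measurable_pi_lambda _ hmeas
  have hm : MemLp id 2 m := (memLp_two_iff_integrable_sq_norm aestronglyMeasurable_id).2 hmom
  calc _ = Var[(fun x => φ (emp x)) ∘ fun ω i => ξ i ω; P] :=
        (variance_eq_integral (hF.lipschitzWith.continuous.measurable.comp hT).aemeasurable).symm
    _ = Var[fun x => φ (emp x); Measure.pi fun _ => m] := by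
        rw [← variance_map hF.lipschitzWith.continuous.aemeasurable hT.aemeasurable, hiid]
    _ ≤ N * ((M1 / N) ^ 2 * varM m) := hF.variance_pi_le hm _
    _ = M1 ^ 2 * varM m / N := by field_simp

end
end

section
/- Let h : ℝ^d → [1/n, n] be measurable with 1/n ≤ h ≤ n, let m_∞ be a probability density on ℝ^d, and let ρ be a smooth mollifier supported in the unit ball. Suppose |∇ log m_∞(z)| ≤ C(1 + |z|) for all z. Then the ratio ((h m_∞) ⋆ ρ)(z)/m_∞(z) satisfies the two-sided exponential bound: (inf h)·exp(−C'(1+|z|)) ≤ ((h m_∞) ⋆ ρ)(z)/m_∞(z) ≤ (sup h)·exp(C'(1+|z|)) for some constant C' and all z ∈ ℝ^d. -/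
open MeasureTheory
open scoped ENNReal

noncomputable section

/-- **Two-sided exponential bound for the mollified ratio.**
If `1/n ≤ h ≤ n`, `m_∞` is a positive probability density with `|∇ log m_∞(z)| ≤ C(1+|z|)`,
and `ρ` is a smooth mollifier supported in the unit ball, then for some constant `C'`,
`(inf h)·exp(−C'(1+|z|)) ≤ ((h m_∞) ⋆ ρ)(z)/m_∞(z) ≤ (sup h)·exp(C'(1+|z|))`. -/
theorem mollified_ratio_bound {d : ℕ} (n : ℕ) (hn : 0 < n)
    (h : Euc d → ℝ) (hmeas : Measurable h)
    (hlb : ∀ x, 1 / (n : ℝ) ≤ h x) (hub : ∀ x, h x ≤ (n : ℝ))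
    (minf : Euc d → ℝ) (hpos : ∀ x, 0 < minf x)
    (hint : ∫ x, minf x = 1)
    (hdiff : Differentiable ℝ fun x => Real.log (minf x))
    (C : ℝ) (hgrad : ∀ z, ‖gradient (fun x => Real.log (minf x)) z‖ ≤ C * (1 + ‖z‖))
    (ρ : Euc d → ℝ) (hρ : ContDiff ℝ (⊤ : ℕ∞) ρ) (hρpos : ∀ x, 0 ≤ ρ x)
    (hρsupp : tsupport ρ ⊆ Metric.closedBall 0 1) (hρint : ∫ x, ρ x = 1) :
    ∃ C' : ℝ, ∀ z : Euc d,
      sInf (Set.range h) * Real.exp (-C' * (1 + ‖z‖)) ≤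
          (∫ y, h y * minf y * ρ (z - y)) / minf z ∧
      (∫ y, h y * minf y * ρ (z - y)) / minf z ≤
        sSup (Set.range h) * Real.exp (C' * (1 + ‖z‖)) := by
  set f := fun x => Real.log (minf x) with hf
  have hC0 : 0 ≤ C := by
    have := (norm_nonneg _).trans (hgrad 0)
    simpa using this
  have hmc : Continuous minf := by
    have : (fun x => Real.exp (f x)) = minf := by
      funext x; exact Real.exp_log (hpos x)
    rw [← this]
    exact Real.continuous_exp.comp hdiff.continuous
  have hbdB : BddBelow (Set.range h) := ⟨1 / n, by rintro _ ⟨x, rfl⟩; exact hlb x⟩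
  have hbdA : BddAbove (Set.range h) := ⟨n, by rintro _ ⟨x, rfl⟩; exact hub x⟩
  have hne : (Set.range h).Nonempty := ⟨h 0, 0, rfl⟩
  have hInf_pos : 0 < sInf (Set.range h) := by
    have : (1 : ℝ) / n ≤ sInf (Set.range h) :=
      le_csInf hne (by rintro _ ⟨x, rfl⟩; exact hlb x)
    have hn' : (0 : ℝ) < 1 / n := by positivity
    linarith
  have hρcont : Continuous ρ := hρ.continuous
  have hρcs : HasCompactSupport ρ :=
    IsCompact.of_isClosed_subset (isCompact_closedBall 0 1) (isClosed_tsupport ρ) hρsupp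
  have hρI : Integrable ρ := hρcont.integrable_of_hasCompactSupport hρcs
  -- key gradient bound on unit ball
  refine ⟨2 * C, fun z => ?_⟩
  set K := 2 * C * (1 + ‖z‖) with hK
  have hK0 : 0 ≤ K := by positivity
  have key : ∀ y : Euc d, ‖z - y‖ ≤ 1 → |f y - f z| ≤ K := by
    intro y hy
    have hconv : Convex ℝ (Metric.closedBall z 1) := convex_closedBall z 1
    have hbound : ∀ x ∈ Metric.closedBall z 1, ‖fderiv ℝ f x‖ ≤ C * (2 + ‖z‖) := by
      intro x hx
      have h1 : ‖fderiv ℝ f x‖ = ‖gradient f x‖ := by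
        rw [gradient]
        exact ((InnerProductSpace.toDual ℝ (Euc d)).symm.norm_map _).symm
      rw [h1]
      refine (hgrad x).trans ?_
      have h6 : ‖x‖ ≤ ‖z‖ + 1 := by
        have h7 := mem_closedBall_iff_norm.mp hx
        have h8 := norm_sub_norm_le x z
        linarith
      nlinarith [norm_nonneg z]
    have hzm : z ∈ Metric.closedBall z 1 := Metric.mem_closedBall_self (by norm_num)
    have hym : y ∈ Metric.closedBall z 1 := by
      rw [Metric.mem_closedBall, dist_eq_norm, ← norm_neg]
      simpa [neg_sub] using hy
    have := hconv.norm_image_sub_le_of_norm_fderiv_le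
      (fun x _ => hdiff x) hbound hzm hym
    rw [Real.norm_eq_abs] at this
    calc |f y - f z| ≤ C * (2 + ‖z‖) * ‖y - z‖ := this
      _ ≤ C * (2 + ‖z‖) * 1 := by
          refine mul_le_mul_of_nonneg_left ?_ (by positivity)
          rw [← norm_neg]; simpa [neg_sub] using hy
      _ ≤ K := by rw [hK]; nlinarith [norm_nonneg z]
  have mub : ∀ y : Euc d, ‖z - y‖ ≤ 1 → minf y ≤ minf z * Real.exp K := by
    intro y hy
    have h1 : f y - f z ≤ K := le_of_abs_le (key y hy)
    have : minf y = minf z * Real.exp (f y - f z) := by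
      rw [Real.exp_sub, hf]
      field_simp [Real.exp_log (hpos y), Real.exp_log (hpos z), (hpos z).ne']
      rw [Real.exp_log (hpos y), Real.exp_log (hpos z)]; ring
    rw [this]
    exact mul_le_mul_of_nonneg_left (Real.exp_le_exp.mpr h1) (hpos z).le
  have mlb : ∀ y : Euc d, ‖z - y‖ ≤ 1 → minf z * Real.exp (-K) ≤ minf y := by
    intro y hy
    have h1 : -K ≤ f y - f z := neg_le_of_abs_le (key y hy)
    have : minf y = minf z * Real.exp (f y - f z) := by
      rw [Real.exp_sub, hf]
      field_simp [Real.exp_log (hpos y), Real.exp_log (hpos z), (hpos z).ne']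
      rw [Real.exp_log (hpos y), Real.exp_log (hpos z)]; ring
    rw [this]
    exact mul_le_mul_of_nonneg_left (Real.exp_le_exp.mpr h1) (hpos z).le
  -- support observation
  have hsupp : ∀ y : Euc d, ρ (z - y) ≠ 0 → ‖z - y‖ ≤ 1 := by
    intro y hy
    have : z - y ∈ tsupport ρ := subset_tsupport ρ hy
    simpa using hρsupp this
  -- pointwise bounds
  have hub' : ∀ y : Euc d, h y * minf y * ρ (z - y) ≤
      sSup (Set.range h) * (minf z * Real.exp K) * ρ (z - y) := by
    intro y
    by_cases hy : ρ (z - y) = 0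
    · simp [hy]
    · have h1 := hsupp y hy
      have h2 : h y ≤ sSup (Set.range h) := le_csSup hbdA ⟨y, rfl⟩
      have h3 := mub y h1
      have h4 : 0 ≤ ρ (z - y) := hρpos _
      have h5 : 0 < h y := lt_of_lt_of_le (by positivity) (hlb y)
      have h6 : h y * minf y ≤ sSup (Set.range h) * (minf z * Real.exp K) :=
        mul_le_mul h2 h3 (hpos y).le (le_trans h5.le h2)
      exact mul_le_mul_of_nonneg_right h6 h4
  have hlb' : ∀ y : Euc d, sInf (Set.range h) * (minf z * Real.exp (-K)) * ρ (z - y) ≤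
      h y * minf y * ρ (z - y) := by
    intro y
    by_cases hy : ρ (z - y) = 0
    · simp [hy]
    · have h1 := hsupp y hy
      have h2 : sInf (Set.range h) ≤ h y := csInf_le hbdB ⟨y, rfl⟩
      have h3 := mlb y h1
      have h4 : 0 ≤ ρ (z - y) := hρpos _
      have h5 : 0 < minf z * Real.exp (-K) := mul_pos (hpos z) (Real.exp_pos _)
      have h6 : sInf (Set.range h) * (minf z * Real.exp (-K)) ≤ h y * minf y :=
        mul_le_mul h2 h3 h5.le (le_trans (by positivity) (hlb y))
      exact mul_le_mul_of_nonneg_right h6 h4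
  -- integrability
  have hρIz : Integrable (fun y => ρ (z - y)) := hρI.comp_sub_left z
  have hρIzint : ∫ y, ρ (z - y) = 1 := by
    rw [integral_sub_left_eq_self ρ volume z, hρint]
  have hmeasI : AEStronglyMeasurable (fun y => h y * minf y * ρ (z - y)) volume := by
    refine (((hmeas.aemeasurable.mul hmc.measurable.aemeasurable).mul ?_)).aestronglyMeasurable
    exact (hρcont.comp (continuous_const.sub continuous_id)).measurable.aemeasurable
  have hII : Integrable (fun y => h y * minf y * ρ (z - y)) := by
    refine Integrable.mono' ((hρIz.const_mul (sSup (Set.range h) * (minf z * Real.exp K)))) hmeasI ?_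
    filter_upwards with y
    have hy0 : 0 ≤ h y := le_trans (by positivity) (hlb y)
    have h0 : 0 ≤ h y * minf y * ρ (z - y) :=
      mul_nonneg (mul_nonneg hy0 (hpos y).le) (hρpos _)
    rw [Real.norm_eq_abs, abs_of_nonneg h0]
    exact hub' y
  -- integrate the bounds
  have hI1 : sInf (Set.range h) * (minf z * Real.exp (-K)) ≤ ∫ y, h y * minf y * ρ (z - y) := by
    have := integral_mono ((hρIz.const_mul _)) hII hlb'
    rwa [integral_const_mul, hρIzint, mul_one] at this
  have hI2 : (∫ y, h y * minf y * ρ (z - y)) ≤ sSup (Set.range h) * (minf z * Real.exp K) := by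
    have := integral_mono hII ((hρIz.const_mul _)) hub'
    rwa [integral_const_mul, hρIzint, mul_one] at this
  constructor
  · rw [le_div_iff₀ (hpos z)]
    calc sInf (Set.range h) * Real.exp (-(2 * C) * (1 + ‖z‖)) * minf z
        = sInf (Set.range h) * (minf z * Real.exp (-K)) := by rw [hK]; ring
      _ ≤ _ := hI1
  · rw [div_le_iff₀ (hpos z)]
    calc (∫ y, h y * minf y * ρ (z - y)) ≤ sSup (Set.range h) * (minf z * Real.exp K) := hI2
      _ = sSup (Set.range h) * Real.exp (2 * C * (1 + ‖z‖)) * minf z := by rw [hK]; ring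

end
end

section
/- Let K(t; a,b,c; M) be the 4×4 upper-triangular matrix with diagonal entries (1 − a + 2at − 2M b t², 2at, 2bt² − 3ct², 2ct³) and off-diagonal entries as in Hérau's functional: K_{12} = −2bt², K_{13} = −2at − 4bt, K_{23} = −2Mct³, K_{24} = −4bt². Then for every M ≥ 0 there exist positive constants a, b, c depending only on M with ac > b², a < 1, such that the symmetrized matrix (K + Kᵀ)/2 is positive semidefinite for all t ∈ [0,1]. -/
/-!
The quadratic form of `(K + Kᵀ)/2` is that of `K`. Multiplied by `6a`, it is a sum of four
squares, one absorbing each off-diagonal entry of `K` into the two diagonal entries it couples,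
plus a diagonal remainder. For `t ∈ [0,1]` the remainder is nonnegative under six polynomial
inequalities between `a, b, c, M`, one per entry they control; the scaling `a = ε`, `b = 16ε²`,
`c = 768ε³` meets all of them once `(M + 1)ε ≤ 1/288`.
-/

open Matrix

noncomputable section

/-- The time-dependent matrix of Hérau's functional. -/
noncomputable def herauMatrix (t a b c M : ℝ) : Matrix (Fin 4) (Fin 4) ℝ :=
  !![1 - a + 2 * a * t - 2 * M * b * t ^ 2, -2 * b * t ^ 2, -2 * a * t - 4 * b * t, 0;
     0, 2 * a * t, -2 * M * c * t ^ 3, -4 * b * t ^ 2;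
     0, 0, 2 * b * t ^ 2 - 3 * c * t ^ 2, 0;
     0, 0, 0, 2 * c * t ^ 3]

namespace Matrix

variable {n : Type*} [Fintype n]

theorem dotProduct_symmPart_mulVec (A : Matrix n n ℝ) (x : n → ℝ) :
    x ⬝ᵥ ((1 / 2 : ℝ) • (A + Aᵀ)) *ᵥ x = x ⬝ᵥ A *ᵥ x := by
  rw [smul_mulVec, add_mulVec, dotProduct_smul, dotProduct_add, dotProduct_transpose_mulVec,
    smul_eq_mul]
  ring

theorem posSemidef_symmPart_iff (A : Matrix n n ℝ) :
    ((1 / 2 : ℝ) • (A + Aᵀ)).PosSemidef ↔ ∀ x, 0 ≤ x ⬝ᵥ A *ᵥ x := by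
  have hHerm : ((1 / 2 : ℝ) • (A + Aᵀ)).IsHermitian := by
    rw [IsHermitian, conjTranspose_eq_transpose_of_trivial, transpose_smul, transpose_add,
      transpose_transpose, add_comm]
  simp only [posSemidef_iff_dotProduct_mulVec, star_trivial, dotProduct_symmPart_mulVec, hHerm,
    true_and]

end Matrix

def herauQuadForm (t a b c M x₁ x₂ x₃ x₄ : ℝ) : ℝ :=
  (1 - a + 2 * a * t - 2 * M * b * t ^ 2) * x₁ ^ 2 + 2 * a * t * x₂ ^ 2
    + (2 * b * t ^ 2 - 3 * c * t ^ 2) * x₃ ^ 2 + 2 * c * t ^ 3 * x₄ ^ 2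
    - 2 * b * t ^ 2 * x₁ * x₂ - (2 * a * t + 4 * b * t) * x₁ * x₃
    - 2 * M * c * t ^ 3 * x₂ * x₃ - 4 * b * t ^ 2 * x₂ * x₄

theorem dotProduct_herauMatrix_mulVec (t a b c M : ℝ) (x : Fin 4 → ℝ) :
    x ⬝ᵥ herauMatrix t a b c M *ᵥ x = herauQuadForm t a b c M (x 0) (x 1) (x 2) (x 3) := by
  simp only [dotProduct, mulVec, herauMatrix, of_apply, cons_val', cons_val_fin_one,
    Fin.sum_univ_four, cons_val_zero, cons_val_one, cons_val, herauQuadForm]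
  ring

theorem six_mul_herauQuadForm (t a b c M x₁ x₂ x₃ x₄ : ℝ) :
    6 * a * herauQuadForm t a b c M x₁ x₂ x₃ x₄ =
      3 * a / 4 * (x₁ - 8 * b * t ^ 2 * x₂) ^ 2
      + 3 * a / 4 * (x₁ - 8 * (a + 2 * b) * t * x₃) ^ 2
      + (2 * a * t * x₂ - 3 * M * c * t ^ 2 * x₃) ^ 2
      + 4 * t * (a * x₂ - 3 * b * t * x₄) ^ 2
      + 6 * a * (3 / 4 - a + 2 * a * t - 2 * M * b * t ^ 2) * x₁ ^ 2
      + a * (8 * a * t - 4 * a * t ^ 2 - 48 * b ^ 2 * t ^ 4) * x₂ ^ 2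
      + ((12 * a * b - 18 * a * c - 48 * a * (a + 2 * b) ^ 2) * t ^ 2
          - 9 * M ^ 2 * c ^ 2 * t ^ 4) * x₃ ^ 2
      + 12 * (a * c - 3 * b ^ 2) * t ^ 3 * x₄ ^ 2 := by
  unfold herauQuadForm
  ring

structure HerauConditions (a b c M : ℝ) : Prop where
  diag₁ : a + 2 * M * b ≤ 3 / 4
  off₁₂ : 12 * b ^ 2 ≤ a
  off₁₃ : 8 * (a + 2 * b) ^ 2 ≤ b
  off₂₃ : 3 * M ^ 2 * c ^ 2 ≤ a * b
  off₂₄ : 3 * b ^ 2 ≤ a * c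
  diag₃ : 6 * c ≤ b

theorem HerauConditions.herauQuadForm_nonneg {a b c M t : ℝ} (h : HerauConditions a b c M)
    (ha : 0 < a) (hM : 0 ≤ M) (ht : t ∈ Set.Icc (0 : ℝ) 1)
    (x₁ x₂ x₃ x₄ : ℝ) : 0 ≤ herauQuadForm t a b c M x₁ x₂ x₃ x₄ := by
  obtain ⟨ht₀, ht₁⟩ := ht
  have hb : 0 ≤ b := (by positivity : (0 : ℝ) ≤ 8 * (a + 2 * b) ^ 2).trans h.off₁₃
  have ht₂ : t ^ 2 ≤ t := by nlinarith
  have ht₄₂ : t ^ 4 ≤ t ^ 2 := by nlinarith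
  have r₁ : 0 ≤ 3 / 4 - a + 2 * a * t - 2 * M * b * t ^ 2 := by
    nlinarith [h.diag₁, mul_nonneg (mul_nonneg hM hb) (sub_nonneg.2 (ht₂.trans ht₁)),
      mul_nonneg ha.le ht₀]
  have r₂ : 0 ≤ 8 * a * t - 4 * a * t ^ 2 - 48 * b ^ 2 * t ^ 4 := by
    nlinarith [h.off₁₂, mul_nonneg ha.le (sub_nonneg.2 ht₂), pow_nonneg ht₀ 4,
      mul_nonneg ha.le (sub_nonneg.2 (ht₄₂.trans ht₂))]
  have r₃ : 0 ≤ (12 * a * b - 18 * a * c - 48 * a * (a + 2 * b) ^ 2) * t ^ 2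
      - 9 * M ^ 2 * c ^ 2 * t ^ 4 := by
    nlinarith [mul_le_mul_of_nonneg_left h.diag₃ ha.le, mul_le_mul_of_nonneg_left h.off₁₃ ha.le,
      h.off₂₃, sq_nonneg t, pow_nonneg ht₀ 4, mul_nonneg (mul_nonneg ha.le hb) (sub_nonneg.2 ht₄₂)]
  have r₄ : 0 ≤ a * c - 3 * b ^ 2 := sub_nonneg.2 h.off₂₄
  have h6a : 0 ≤ 6 * a * herauQuadForm t a b c M x₁ x₂ x₃ x₄ := by
    rw [six_mul_herauQuadForm]
    positivity
  exact (mul_nonneg_iff_of_pos_left (by positivity)).mp h6a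

theorem herauConditions_of_mul_le {ε M : ℝ} (hε : 0 < ε) (hM : 0 ≤ M)
    (hMε : (M + 1) * ε ≤ 1 / 288) : HerauConditions ε (16 * ε ^ 2) (768 * ε ^ 3) M := by
  have hε₁ : ε ≤ 1 / 288 := by nlinarith
  have hMε₁ : M * ε ≤ 1 / 288 := by nlinarith
  have hMε₀ : 0 ≤ M * ε := by positivity
  constructor
  · nlinarith
  · nlinarith [pow_pos hε 3]
  · nlinarith [pow_pos hε 3, pow_pos hε 4]
  · have hsmall : (M * ε) ^ 2 * ε ≤ (1 / 288) ^ 2 * (1 / 288) :=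
      mul_le_mul (pow_le_pow_left₀ hMε₀ hMε₁ 2) hε₁ hε.le (by positivity)
    nlinarith [mul_le_mul_of_nonneg_right hsmall (pow_pos hε 3).le]
  · nlinarith [pow_pos hε 4]
  · nlinarith [pow_pos hε 2]

/-- **Existence of Hérau coefficients.** For every `M ≥ 0` there exist `a, b, c > 0`
with `ac > b²` and `a < 1` such that the symmetrization `(K + Kᵀ)/2` of Hérau's matrix is
positive semidefinite for all `t ∈ [0,1]`. -/
theorem herau_coefficients : ∀ M : ℝ, 0 ≤ M → ∃ a b c : ℝ,
    0 < a ∧ 0 < b ∧ 0 < c ∧ b ^ 2 < a * c ∧ a < 1 ∧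
    ∀ t ∈ Set.Icc (0:ℝ) 1,
      ((1 / 2 : ℝ) • (herauMatrix t a b c M + (herauMatrix t a b c M)ᵀ)).PosSemidef := by
  intro M hM
  set ε : ℝ := 1 / (288 * (M + 1))
  have hε : 0 < ε := by positivity
  have h : HerauConditions ε (16 * ε ^ 2) (768 * ε ^ 3) M :=
    herauConditions_of_mul_le hε hM (le_of_eq (by simp only [ε]; field_simp))
  have hb : 0 < 16 * ε ^ 2 := by positivity
  refine ⟨ε, 16 * ε ^ 2, 768 * ε ^ 3, hε, hb, by positivity, ?_, ?_, fun t ht => ?_⟩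
  · nlinarith [h.off₂₄]
  · nlinarith [h.diag₁, mul_nonneg hM hb.le]
  · rw [posSemidef_symmPart_iff]
    intro x
    rw [dotProduct_herauMatrix_mulVec]
    exact h.herauQuadForm_nonneg hε hM ht _ _ _ _

end
end
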